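/- arXiv:2505.16628 — 3 statements merged into one kernel-verified Lean document; each statement's English description precedes it below -/
import Mathlib

section
/- Let A ⊆ ℕ^ℕ, let t ↦ <_t (for t ∈ ℕ^{<ω}) be an order representation of A, and let κ be an ordinal. Consider the set B of pairs ((n_k)_{k∈ℕ}, (ξ_i)_{i∈ℕ}) ∈ ℕ^ℕ × κ^ℕ such that for every k ∈ ℕ and all i, j < k/2: i <_{x↾k} j if and only if ξ_i < ξ_j, where x = (n_k)_k. Then B is closed in the product topology (ℕ and κ discrete), and every pair in B satisfies x ∈ A; consequently B coincides with the set of pairs satisfying both the order-embedding condition and x ∈ A. -/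
/-- The finite sequence of the first `n` terms of `x`, i.e. `x ↾ n`. -/
def hist {X : Type*} (x : ℕ → X) (n : ℕ) : List X := List.ofFn (fun i : Fin n => x i)

lemma hist_prefix {X : Type*} (x : ℕ → X) {m k : ℕ} (h : m ≤ k) :
    hist x m <+: hist x k := by
  rw [List.prefix_iff_eq_take]
  apply List.ext_getElem
  · simp [hist, h]
  · intro i h1 h2
    simp [hist]

lemma hist_eq_of_agree {X : Type*} {x y : ℕ → X} {k : ℕ} (h : ∀ m < k, x m = y m) :
    hist x k = hist y k := by
  unfold hist
  congr 1
  ext i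
  exact h i i.isLt

/-- `R` is an order representation of `A ⊆ ℕ^ℕ`: to each finite sequence `t` of naturals
it assigns a strict linear order `R t` on `{0, 1, …, |t|}`, monotone under initial
segments, such that `x ∈ A` iff the union order `<_x := ⋃ₙ R (x ↾ n)` is wellfounded
(has no infinite strictly descending sequence). -/
structure OrderRep (A : Set (ℕ → ℕ)) (R : List ℕ → ℕ → ℕ → Prop) : Prop where
  /-- `R t` only relates numbers in `{0, …, |t|}`. -/
  dom : ∀ t : List ℕ, ∀ i j, R t i j → i ≤ t.length ∧ j ≤ t.length
  /-- `R t` is irreflexive. -/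
  irrefl : ∀ t : List ℕ, ∀ i, ¬ R t i i
  /-- `R t` is transitive. -/
  trans : ∀ t : List ℕ, ∀ i j k, R t i j → R t j k → R t i k
  /-- `R t` is total (linear) on `{0, …, |t|}`. -/
  total : ∀ t : List ℕ, ∀ i j, i ≤ t.length → j ≤ t.length → i ≠ j → R t i j ∨ R t j i
  /-- If `t` is an initial segment of `s`, then `R t ⊆ R s`. -/
  mono : ∀ t s : List ℕ, t <+: s → ∀ i j, R t i j → R s i j
  /-- `x ∈ A` iff `<_x = ⋃ₙ R (x ↾ n)` has no infinite strictly descending sequence. -/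
  mem_iff : ∀ x : ℕ → ℕ,
    (x ∈ A ↔ ¬ ∃ f : ℕ → ℕ, ∀ n : ℕ, ∃ m : ℕ, R (hist x m) (f (n + 1)) (f n))

/-- The set `B` of pairs `(x, ξ) = ((n_k)_k, (ξ_i)_i)` such that for every `k` and all
`i, j < k / 2`: `i <_{x ↾ k} j` iff `ξ_i < ξ_j`. Here `O` plays the role of the
ordinal `κ`, regarded as the well-ordered set of ordinals below it. -/
def AuxB (R : List ℕ → ℕ → ℕ → Prop) (O : Type*) [LT O] :
    Set ((ℕ → ℕ) × (ℕ → O)) :=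
  {p | ∀ k i j, i < k / 2 → j < k / 2 → (R (hist p.1 k) i j ↔ p.2 i < p.2 j)}

/-- Given an order representation `t ↦ <_t` of `A ⊆ ℕ^ℕ` and an ordinal `κ`
(formalized as a well-ordered set `O`), the set `B ⊆ ℕ^ℕ × κ^ℕ` of pairs satisfying
the order-embedding condition is closed in the product topology (with `ℕ` and `κ`
discrete); moreover every pair in `B` satisfies `x ∈ A`, so `B` coincides with the set
of pairs satisfying both the embedding condition and `x ∈ A`. -/
theorem auxB_closed_and_subset (A : Set (ℕ → ℕ)) (R : List ℕ → ℕ → ℕ → Prop)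
    (hR : OrderRep A R) (O : Type*) [LinearOrder O] [WellFoundedLT O]
    [TopologicalSpace O] [DiscreteTopology O] :
    IsClosed (AuxB R O) ∧ (∀ p ∈ AuxB R O, p.1 ∈ A) ∧
      AuxB R O = {p : (ℕ → ℕ) × (ℕ → O) | p ∈ AuxB R O ∧ p.1 ∈ A} := by
  have hmem : ∀ p ∈ AuxB R O, p.1 ∈ A := by
    intro p hp
    rw [hR.mem_iff]
    rintro ⟨f, hf⟩
    -- build a strictly descending sequence in O
    have key : ∀ n, p.2 (f (n + 1)) < p.2 (f n) := by
      intro n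
      obtain ⟨m, hm⟩ := hf n
      set a := f (n + 1)
      set b := f n
      set k := 2 * (max a b + 1 + m) with hk
      have hmk : m ≤ k := by omega
      have hRk : R (hist p.1 k) a b := hR.mono _ _ (hist_prefix p.1 hmk) _ _ hm
      have hk2 : k / 2 = max a b + 1 + m := by omega
      have ha : a < k / 2 := by omega
      have hb : b < k / 2 := by omega
      exact (hp k a b ha hb).mp hRk
    obtain ⟨_, ⟨n, rfl⟩, hmin⟩ :=
      (wellFounded_lt (α := O)).has_min (Set.range fun n => p.2 (f n)) ⟨_, 0, rfl⟩
    exact hmin _ ⟨n + 1, rfl⟩ (key n)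
  refine ⟨?_, hmem, ?_⟩
  · rw [← isOpen_compl_iff, isOpen_iff_mem_nhds]
    intro p hp
    simp only [Set.mem_compl_iff, AuxB, Set.mem_setOf_eq, not_forall] at hp
    obtain ⟨k, i, j, hi, hj, hne⟩ := hp
    have hV1 : {x : ℕ → ℕ | ∀ m < k, x m = p.1 m} ∈ nhds p.1 := by
      have : {x : ℕ → ℕ | ∀ m < k, x m = p.1 m} =
          ⋂ m ∈ Finset.range k, (fun x : ℕ → ℕ => x m) ⁻¹' {p.1 m} := by
        ext x; simp
      rw [this]
      apply (Finset.range k).iInter_mem_sets.mpr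
      intro m _
      exact ((continuous_apply m).isOpen_preimage _ (isOpen_discrete _)).mem_nhds rfl
    have hV2 : {ξ : ℕ → O | ξ i = p.2 i ∧ ξ j = p.2 j} ∈ nhds p.2 := by
      have h1 := ((continuous_apply i).isOpen_preimage ({p.2 i} : Set O)
        (isOpen_discrete _)).mem_nhds (by simp : p.2 ∈ _)
      have h2 := ((continuous_apply j).isOpen_preimage ({p.2 j} : Set O)
        (isOpen_discrete _)).mem_nhds (by simp : p.2 ∈ _)
      filter_upwards [h1, h2] with ξ hx1 hx2
      exact ⟨hx1, hx2⟩
    have hU : (fun q : (ℕ → ℕ) × (ℕ → O) => q.1) ⁻¹' {x | ∀ m < k, x m = p.1 m} ∩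
        (fun q : (ℕ → ℕ) × (ℕ → O) => q.2) ⁻¹' {ξ | ξ i = p.2 i ∧ ξ j = p.2 j}
        ∈ nhds p := by
      exact Filter.inter_mem (continuous_fst.continuousAt.preimage_mem_nhds hV1)
        (continuous_snd.continuousAt.preimage_mem_nhds hV2)
    filter_upwards [hU] with q hq
    obtain ⟨hq1, hq2, hq3⟩ := hq
    intro hqB
    apply hne
    have : hist q.1 k = hist p.1 k := hist_eq_of_agree hq1
    rw [← this, ← hq2, ← hq3]
    exact hqB k i j hi hj
  · ext p
    simp only [Set.mem_setOf_eq, iff_self_and]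
    exact hmem p
end

section
/- Let A ⊆ ℕ^ℕ, let t ↦ <_t be an order representation of A, and let κ be an ordinal. Consider the auxiliary game in which player I, at his i-th move, plays a pair (n_{2i}, ξ_i) ∈ ℕ × κ, player II plays n_{2i+1} ∈ ℕ, and player I wins the resulting play iff x := (n_k)_k ∈ A and for every k and all i, j < k/2: i <_{x↾k} j if and only if ξ_i < ξ_j. If player I has a winning strategy in this auxiliary game, then player I has a winning strategy in the Gale–Stewart game on ℕ with payoff A. -/
/-- A play `x` is consistent with a strategy `σ` for player I in the Gale–Stewart game
on ℕ if `x (2k) = σ (x ↾ 2k)` for all `k`. -/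
def ConsistentI (σ : List ℕ → ℕ) (x : ℕ → ℕ) : Prop :=
  ∀ k, x (2 * k) = σ (hist x (2 * k))

/-- A strategy `σ` is winning for player I in the Gale–Stewart game on ℕ with payoff `A`
if every play consistent with it lies in `A`. -/
def WinningI (A : Set (ℕ → ℕ)) (σ : List ℕ → ℕ) : Prop :=
  ∀ x : ℕ → ℕ, ConsistentI σ x → x ∈ A

/-- Player I wins the play `(x, ξ)` of the auxiliary game iff `x ∈ A` and for every `k`
and all `i, j < k / 2`: `i <_{x ↾ k} j` iff `ξ_i < ξ_j`. -/
def AuxPayoff (A : Set (ℕ → ℕ)) (R : List ℕ → ℕ → ℕ → Prop) {O : Type*} [LT O]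
    (x : ℕ → ℕ) (ξ : ℕ → O) : Prop :=
  x ∈ A ∧ ∀ k i j, i < k / 2 → j < k / 2 → (R (hist x k) i j ↔ ξ i < ξ j)

/-- A strategy for player I in the auxiliary game assigns to each position (the
sequences of natural-number moves and ordinal moves made so far) a pair
`(n_{2i}, ξ_i) ∈ ℕ × κ`; it is winning if every play consistent with it satisfies
the auxiliary payoff. -/
def AuxWinningI (A : Set (ℕ → ℕ)) (R : List ℕ → ℕ → ℕ → Prop) {O : Type*} [LT O]
    (σ : List ℕ × List O → ℕ × O) : Prop :=
  ∀ (x : ℕ → ℕ) (ξ : ℕ → O),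
    (∀ i, (x (2 * i), ξ i) = σ (hist x (2 * i), hist ξ i)) → AuxPayoff A R x ξ

/-!
Player I simply plays the natural-number component of the auxiliary strategy, reconstructing
the ordinal moves it would have made from the natural-number history. Every play consistent with
this strategy then lifts to a play of the auxiliary game consistent with the auxiliary strategy,
whose payoff contains membership in `A`.
-/

theorem hist_take {X : Type*} (x : ℕ → X) {m n : ℕ} (h : m ≤ n) :
    (hist x n).take m = hist x m := by
  apply List.ext_getElem
  · simp [hist]
    omega
  · intro i _ _
    simp [hist, List.getElem_take]

theorem hist_succ {X : Type*} (x : ℕ → X) (n : ℕ) :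
    hist x (n + 1) = hist x n ++ [x n] := by
  rw [hist, List.ofFn_succ']
  simp [hist]

section ForgetAuxMoves

variable {O : Type*} (σ : List ℕ × List O → ℕ × O)

/-- The first `i` auxiliary moves that `σ` makes along the natural-number history `t`. -/
def auxMoves : ℕ → List ℕ → List O
  | 0, _ => []
  | i + 1, t => auxMoves i t ++ [(σ (t.take (2 * i), auxMoves i t)).2]

def forgetAuxMoves (t : List ℕ) : ℕ := (σ (t, auxMoves σ (t.length / 2) t)).1

variable {σ}

theorem auxMoves_take {i m : ℕ} (h : 2 * i ≤ m) (t : List ℕ) :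
    auxMoves σ i (t.take m) = auxMoves σ i t := by
  induction i with
  | zero => rfl
  | succ i ih =>
    have hi : 2 * i ≤ m := by omega
    simp only [auxMoves, ih hi, List.take_take, Nat.min_eq_left hi]

theorem auxMoves_hist (x : ℕ → ℕ) {i n : ℕ} (h : 2 * i ≤ n) :
    auxMoves σ i (hist x n) = auxMoves σ i (hist x (2 * i)) := by
  rw [← hist_take x h, auxMoves_take le_rfl]

theorem exists_auxPlay_of_consistentI {x : ℕ → ℕ} (hx : ConsistentI (forgetAuxMoves σ) x) :
    ∃ ξ : ℕ → O, ∀ i, (x (2 * i), ξ i) = σ (hist x (2 * i), hist ξ i) := by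
  set ξ : ℕ → O := fun i => (σ (hist x (2 * i), auxMoves σ i (hist x (2 * i)))).2
  have hist_ξ : ∀ i, hist ξ i = auxMoves σ i (hist x (2 * i)) := by
    intro i
    induction i with
    | zero => rfl
    | succ i ih =>
      rw [hist_succ, auxMoves, auxMoves_hist x (by omega), hist_take x (by omega), ih]
  refine ⟨ξ, fun i => Prod.ext ?_ ?_⟩
  · have hlen : (hist x (2 * i)).length / 2 = i := by simp [hist]
    simpa [forgetAuxMoves, hlen, hist_ξ i] using hx i
  · simp only [ξ, hist_ξ i]

end ForgetAuxMoves

theorem winningI_of_auxWinningI_general (A : Set (ℕ → ℕ)) (R : List ℕ → ℕ → ℕ → Prop)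
    (O : Type*) [LinearOrder O]
    (σ : List ℕ × List O → ℕ × O) (hσ : AuxWinningI A R σ) :
    ∃ σ' : List ℕ → ℕ, WinningI A σ' := by
  refine ⟨forgetAuxMoves σ, fun x hx => ?_⟩
  obtain ⟨ξ, hξ⟩ := exists_auxPlay_of_consistentI hx
  exact (hσ x ξ hξ).1

/-- If player I has a winning strategy in the auxiliary game (with ordinal moves drawn
from the ordinal `κ`, formalized as a well-ordered set `O`) associated to an order
representation of `A`, then player I has a winning strategy in the Gale–Stewart game
on ℕ with payoff `A`. -/
theorem winningI_of_auxWinningI (A : Set (ℕ → ℕ)) (R : List ℕ → ℕ → ℕ → Prop)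
    (hR : OrderRep A R) (O : Type*) [LinearOrder O] [WellFoundedLT O]
    (σ : List ℕ × List O → ℕ × O) (hσ : AuxWinningI A R σ) :
    ∃ σ' : List ℕ → ℕ, WinningI A σ' :=
  winningI_of_auxWinningI_general A R O σ hσ
end

section
/- Let κ be an uncountable cardinal carrying a normal κ-complete nonprincipal ultrafilter U, and let n ≥ 1 be a natural number. Then the family U_n consisting of all sets Y of n-element subsets of κ such that [X]^n ⊆ Y for some X ∈ U is a countably complete ultrafilter on the set [κ]^n of n-element subsets of κ; in particular, for every function f from [κ]^n to ℕ there is a unique m ∈ ℕ and a set X ∈ U such that f takes the constant value m on all n-element subsets of X. -/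
universe u

/-- An ultrafilter `U` on `κ` is `κ`-complete if it is closed under intersections of
families of fewer than `κ` of its members. -/
def KappaComplete {O : Type u} (U : Ultrafilter O) : Prop :=
  ∀ S : Set (Set O), Cardinal.mk S < Cardinal.mk O → (∀ t ∈ S, t ∈ U) → ⋂₀ S ∈ U

/-- An ultrafilter is nonprincipal if it contains no singleton. -/
def Nonprincipal {O : Type u} (U : Ultrafilter O) : Prop :=
  ∀ a : O, {a} ∉ U

/-- An ultrafilter `U` on a well-ordered set `κ` is normal if it is closed under
diagonal intersections. -/
def NormalUF {O : Type u} [LT O] (U : Ultrafilter O) : Prop :=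
  ∀ f : O → Set O, (∀ a, f a ∈ U) → {a : O | ∀ b, b < a → a ∈ f b} ∈ U

/-- `[κ]^n`: the collection of `n`-element subsets of `κ`. -/
def nSubsets (O : Type u) (n : ℕ) : Type u := {s : Finset O // s.card = n}

/-- A filter is countably complete if it is closed under countable intersections. -/
def CountablyComplete {α : Type u} (V : Ultrafilter α) : Prop :=
  ∀ g : ℕ → Set α, (∀ k, g k ∈ V) → ⋂ k, g k ∈ V

section Aux
variable {O : Type u} [LinearOrder O]

lemma mem_uf_infinite (U : Ultrafilter O) (hnp : Nonprincipal U) {X : Set O} (hX : X ∈ U) :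
    X.Infinite := by
  by_contra h
  rw [Set.not_infinite] at h
  have hc : Xᶜ ∈ U := by
    have he : Xᶜ = ⋂ a ∈ h.toFinset, ({a}ᶜ : Set O) := by
      ext x
      simp only [Set.mem_compl_iff, Set.mem_iInter, Set.mem_singleton_iff,
        Set.Finite.mem_toFinset]
      exact ⟨fun h a ha e => h (e ▸ ha), fun h hx => h x hx rfl⟩
    rw [he]
    exact (Filter.biInter_finset_mem _).mpr fun a _ =>
      (Ultrafilter.compl_mem_iff_notMem.mpr (hnp a))
  exact (Ultrafilter.compl_mem_iff_notMem.mp hc) hX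

lemma exists_nsub (U : Ultrafilter O) (hnp : Nonprincipal U) {X : Set O} (hX : X ∈ U)
    (n : ℕ) : ∃ s : nSubsets O n, (↑s.1 : Set O) ⊆ X := by
  obtain ⟨t, hts, htc⟩ := (mem_uf_infinite U hnp hX).exists_subset_card_eq n
  exact ⟨⟨t, htc⟩, hts⟩

lemma homog (U : Ultrafilter O) (hnorm : NormalUF U) :
    ∀ (n : ℕ) (Y : Set (nSubsets O n)),
      ∃ X ∈ U, (∀ s : nSubsets O n, (↑s.1 : Set O) ⊆ X → s ∈ Y) ∨
               (∀ s : nSubsets O n, (↑s.1 : Set O) ⊆ X → s ∉ Y) := by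
  intro n
  induction n with
  | zero =>
    intro Y
    refine ⟨Set.univ, Filter.univ_mem, ?_⟩
    have hone : ∀ s : nSubsets O 0, s = ⟨∅, rfl⟩ := by
      rintro ⟨s, hs⟩
      exact Subtype.ext (Finset.card_eq_zero.mp hs)
    by_cases h : (⟨∅, rfl⟩ : nSubsets O 0) ∈ Y
    · exact Or.inl fun s _ => (hone s) ▸ h
    · exact Or.inr fun s _ => (hone s) ▸ h
  | succ n ih =>
    intro Y
    set Yc : O → Set (nSubsets O n) := fun α =>
      {t | ∀ hp : (insert α t.1).card = n + 1, (⟨insert α t.1, hp⟩ : nSubsets O (n+1)) ∈ Y}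
      with hYc
    choose Xf hXf hhom using fun α => ih (Yc α)
    set Z := {α | ∀ t : nSubsets O n, (↑t.1 : Set O) ⊆ Xf α → t ∈ Yc α} with hZ
    set D := {a : O | ∀ b, b < a → a ∈ Xf b} with hD
    have hDU : D ∈ U := hnorm Xf hXf
    -- common decomposition
    have key : ∀ s : nSubsets O (n+1), (↑s.1 : Set O) ⊆ D →
        ∃ (α : O) (t : nSubsets O n), α ∈ (↑s.1 : Set O) ∧ (↑t.1 : Set O) ⊆ Xf α ∧
          ∃ hp : (insert α t.1).card = n + 1,
            (⟨insert α t.1, hp⟩ : nSubsets O (n+1)) = s := by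
      intro s hsD
      have hne : s.1.Nonempty := Finset.card_pos.mp (by rw [s.2]; omega)
      set α := s.1.min' hne with hα
      have hαs : α ∈ s.1 := s.1.min'_mem hne
      have htc : (s.1.erase α).card = n := by
        rw [Finset.card_erase_of_mem hαs, s.2]; omega
      refine ⟨α, ⟨s.1.erase α, htc⟩, hαs, ?_, ?_⟩
      · intro β hβ
        simp only [Finset.coe_erase, Set.mem_diff, Finset.mem_coe,
          Set.mem_singleton_iff] at hβ
        have hβD : β ∈ D := hsD hβ.1
        have hαβ : α < β := lt_of_le_of_ne (s.1.min'_le β hβ.1) (Ne.symm hβ.2)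
        exact hβD α hαβ
      · have hins : insert α (s.1.erase α) = s.1 := Finset.insert_erase hαs
        refine ⟨by rw [hins]; exact s.2, Subtype.ext hins⟩
    rcases (U : Ultrafilter O).mem_or_compl_mem Z with hZU | hZU
    · refine ⟨Z ∩ D, Filter.inter_mem hZU hDU, Or.inl ?_⟩
      intro s hs
      obtain ⟨α, t, hαs, htX, hp, heq⟩ := key s (hs.trans (Set.inter_subset_right))
      have hαZ : α ∈ Z := (hs hαs).1
      have := hαZ t htX hp
      rwa [heq] at this
    · refine ⟨Zᶜ ∩ D, Filter.inter_mem hZU hDU, Or.inr ?_⟩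
      intro s hs hsY
      obtain ⟨α, t, hαs, htX, hp, heq⟩ := key s (hs.trans (Set.inter_subset_right))
      have hαZ : α ∈ Zᶜ := (hs hαs).1
      have hright : ∀ t : nSubsets O n, (↑t.1 : Set O) ⊆ Xf α → t ∉ Yc α := by
        rcases hhom α with h | h
        · exact absurd h hαZ
        · exact h
      exact hright t htX (fun hp' => by rwa [heq])

end Aux

/-- Let `κ` be an uncountable cardinal (formalized as an uncountable well-ordered set
`O`) carrying a normal `κ`-complete nonprincipal ultrafilter `U`, and let `n ≥ 1`.
Then the family `U_n` of all sets `Y ⊆ [κ]^n` such that `[X]^n ⊆ Y` for some `X ∈ U`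
is a countably complete ultrafilter on `[κ]^n`; in particular, every `f : [κ]^n → ℕ`
takes a unique constant value `m` on `[X]^n` for some `X ∈ U`. -/
theorem product_ultrafilter {O : Type u} [LinearOrder O] [WellFoundedLT O]
    [Uncountable O] (U : Ultrafilter O)
    (hU_complete : KappaComplete U) (hU_nonpr : Nonprincipal U) (hU_normal : NormalUF U)
    (n : ℕ) (hn : 1 ≤ n) :
    ∃ V : Ultrafilter (nSubsets O n),
      (∀ Y : Set (nSubsets O n),
        Y ∈ V ↔ ∃ X ∈ U, ∀ s : nSubsets O n, (↑s.1 : Set O) ⊆ X → s ∈ Y) ∧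
      CountablyComplete V ∧
      (∀ f : nSubsets O n → ℕ,
        ∃! m : ℕ, ∃ X ∈ U, ∀ s : nSubsets O n, (↑s.1 : Set O) ⊆ X → f s = m) := by
  classical
  set P : Set (nSubsets O n) → Prop :=
    fun Y => ∃ X ∈ U, ∀ s : nSubsets O n, (↑s.1 : Set O) ⊆ X → s ∈ Y with hP
  have hF : ∃ F : Filter (nSubsets O n), ∀ Y, Y ∈ F ↔ P Y := by
    refine ⟨⟨{Y | P Y}, ?_, ?_, ?_⟩, fun Y => Iff.rfl⟩
    · exact ⟨Set.univ, Filter.univ_mem, fun _ _ => trivial⟩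
    · rintro Y Z ⟨X, hX, h⟩ hYZ
      exact ⟨X, hX, fun s hs => hYZ (h s hs)⟩
    · rintro Y Z ⟨X1, hX1, h1⟩ ⟨X2, hX2, h2⟩
      exact ⟨X1 ∩ X2, Filter.inter_mem hX1 hX2, fun s hs =>
        ⟨h1 s (hs.trans Set.inter_subset_left), h2 s (hs.trans Set.inter_subset_right)⟩⟩
  obtain ⟨F, hFmem⟩ := hF
  have hultra : ∀ Y : Set (nSubsets O n), Yᶜ ∈ F ↔ Y ∉ F := by
    intro Y
    constructor
    · rintro hc hY
      obtain ⟨X1, hX1, h1⟩ := (hFmem Y).mp hY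
      obtain ⟨X2, hX2, h2⟩ := (hFmem Yᶜ).mp hc
      obtain ⟨s, hs⟩ := exists_nsub U hU_nonpr (Filter.inter_mem hX1 hX2) n
      exact h2 s (hs.trans Set.inter_subset_right)
        (h1 s (hs.trans Set.inter_subset_left))
    · intro hY
      obtain ⟨X, hX, hX2⟩ := homog U hU_normal n Y
      rcases hX2 with h | h
      · exact absurd ((hFmem Y).mpr ⟨X, hX, h⟩) hY
      · exact (hFmem Yᶜ).mpr ⟨X, hX, h⟩
  have hultra' : ∀ Y : Set (nSubsets O n), Yᶜ ∉ F ↔ Y ∈ F := fun Y =>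
    ⟨fun h => by_contra fun hs => h ((hultra Y).mpr hs), fun hs h => (hultra Y).mp h hs⟩
  set V : Ultrafilter (nSubsets O n) := Ultrafilter.ofComplNotMemIff F hultra' with hV
  have hVmem : ∀ Y, Y ∈ V ↔ P Y := hFmem
  have hcc : CountablyComplete V := by
    intro g hg
    choose X hXU hXg using fun k => (hVmem (g k)).mp (hg k)
    have hint : ⋂ k, X k ∈ U := by
      have := hU_complete (Set.range X) ?_ ?_
      · rwa [Set.sInter_range] at this
      · calc Cardinal.mk (Set.range X) ≤ Cardinal.aleph0 := (Set.countable_range X).le_aleph0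
          _ < Cardinal.mk O := Cardinal.aleph0_lt_mk
      · rintro t ⟨k, rfl⟩; exact hXU k
    refine (hVmem _).mpr ⟨⋂ k, X k, hint, fun s hs => ?_⟩
    exact Set.mem_iInter.mpr fun k => hXg k s (hs.trans (Set.iInter_subset X k))
  refine ⟨V, hVmem, hcc, ?_⟩
  intro f
  have hex : ∃ m, f ⁻¹' {m} ∈ V := by
    by_contra h
    push_neg at h
    have h2 : ∀ m, (f ⁻¹' {m})ᶜ ∈ V := fun m =>
      Ultrafilter.compl_mem_iff_notMem.mpr (h m)
    have h3 := hcc _ h2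
    have h4 : ⋂ m, (f ⁻¹' {m})ᶜ = (∅ : Set (nSubsets O n)) := by
      ext s
      simp only [Set.mem_iInter, Set.mem_compl_iff, Set.mem_preimage,
        Set.mem_singleton_iff, Set.mem_empty_iff_false, iff_false, not_forall, not_not]
      exact ⟨f s, rfl⟩
    rw [h4] at h3
    exact V.neBot.ne (Filter.empty_mem_iff_bot.mp h3)
  obtain ⟨m, hm⟩ := hex
  obtain ⟨X, hXU, hX⟩ := (hVmem _).mp hm
  refine ⟨m, ⟨X, hXU, fun s hs => hX s hs⟩, ?_⟩
  rintro m' ⟨X', hX'U, hX'⟩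
  obtain ⟨s, hs⟩ := exists_nsub U hU_nonpr (Filter.inter_mem hX'U hXU) n
  rw [← hX' s (hs.trans Set.inter_subset_left), hX s (hs.trans Set.inter_subset_right)]
end
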